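/- Let λ_n be as above and ψ(x) = x - 1/x for x > 0. For all real s with 0 < s ≤ 1 and all n ≥ 2, |ψ^{∘n}(a_n(s)) - ψ^{∘n}(b_n(s))| ≤ max(λ_2^{s-1}, 1) · s(n+1)/(λ_n λ_{n-1}^2) · (λ_n^2 - λ_{n-1}^2), where a_n(s) = λ_n (λ_n/λ_{n-1})^s and b_n(s) = λ_n (λ_{n+1}/λ_n)^s. In particular ψ^{∘n}(a_n(s)) - ψ^{∘n}(b_n(s)) → 0 as n → ∞. -/

import Mathlib

noncomputable def lam : ℕ → ℝ
  | 0 => 0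
  | n + 1 => (lam n + Real.sqrt (lam n ^ 2 + 4)) / 2

noncomputable def psiR (x : ℝ) : ℝ := x - 1 / x

/-!
Since `ψ (λ_{k+1}) = λ_k` and `ψ' x = 1 + 1 / x ^ 2 ≤ 1 + 1 / (k + 1)` for `x ≥ λ_{k+1}`, the
`n`-fold iterate of `ψ` is monotone and `(n + 1)`-Lipschitz on `[λ_n, ∞)`, the factors telescoping
to `∏ (1 + 1 / k) = n + 1`; both `a_n(s) ≥ b_n(s) ≥ λ_n`. Bernoulli's inequality gives
`a_n(s) - b_n(s) ≤ s λ_n (λ_n / λ_{n-1} - λ_{n+1} / λ_n)`, and the recurrence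
`λ_{k+1} ^ 2 = λ_k λ_{k+1} + 1` bounds the right side by `s (λ_n² - λ_{n-1}²) / (λ_n λ_{n-1}²)`.
As `λ_n² - λ_{n-1}² ≤ 2` and `λ_{n-1}² ≥ n - 1`, the whole bound is `O(1 / λ_n)`, and `λ_n ≥ √n`.
-/

open Filter

lemma lam_succ_pos (n : ℕ) : 0 < lam (n + 1) := by
  have h : |lam n| < Real.sqrt (lam n ^ 2 + 4) := by
    rw [← Real.sqrt_sq_eq_abs]; gcongr; linarith
  rw [lam]; linarith [neg_abs_le (lam n)]

lemma lam_succ_sq (n : ℕ) : lam (n + 1) ^ 2 = lam n * lam (n + 1) + 1 := by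
  have h := Real.sq_sqrt (by positivity : (0 : ℝ) ≤ lam n ^ 2 + 4)
  rw [lam]; linear_combination h / 4

lemma lam_le_lam_succ (n : ℕ) : lam n ≤ lam (n + 1) := by
  nlinarith [lam_succ_sq n, lam_succ_pos n]

lemma lam_nonneg (n : ℕ) : 0 ≤ lam n := by
  cases n with
  | zero => rfl
  | succ n => exact (lam_succ_pos n).le

lemma lam_pos {n : ℕ} (hn : n ≠ 0) : 0 < lam n := by
  obtain ⟨m, rfl⟩ := Nat.exists_eq_succ_of_ne_zero hn
  exact lam_succ_pos m

lemma natCast_le_lam_sq : ∀ n : ℕ, (n : ℝ) ≤ lam n ^ 2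
  | 0 => by simp [lam]
  | n + 1 => by
    have := natCast_le_lam_sq n
    push_cast
    nlinarith [lam_succ_sq n, lam_le_lam_succ n, lam_nonneg n]

lemma tendsto_lam_atTop : Tendsto lam atTop atTop := by
  refine tendsto_atTop_mono (fun n => ?_)
    (Real.tendsto_sqrt_atTop.comp tendsto_natCast_atTop_atTop)
  simpa [Real.sqrt_sq (lam_nonneg n)] using Real.sqrt_le_sqrt (natCast_le_lam_sq n)

lemma psiR_sub_psiR {x y : ℝ} (hx : x ≠ 0) (hy : y ≠ 0) :
    psiR x - psiR y = (x - y) * (1 + 1 / (x * y)) := by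
  unfold psiR; field_simp; ring

lemma psiR_le_psiR {x y : ℝ} (hy : 0 < y) (hyx : y ≤ x) : psiR y ≤ psiR x := by
  have hx : 0 < x := hy.trans_le hyx
  rw [← sub_nonneg, psiR_sub_psiR hx.ne' hy.ne']
  exact mul_nonneg (sub_nonneg.2 hyx) (by positivity)

lemma psiR_lam_succ (n : ℕ) : psiR (lam (n + 1)) = lam n := by
  have := lam_succ_pos n
  unfold psiR
  field_simp
  linear_combination lam_succ_sq n

lemma psiR_sub_psiR_le {x y c : ℝ} (hc : 0 < c) (hcxy : c ≤ x * y) (hy : 0 < y) (hyx : y ≤ x) :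
    psiR x - psiR y ≤ (1 + 1 / c) * (x - y) := by
  have hx : 0 < x := hy.trans_le hyx
  rw [psiR_sub_psiR hx.ne' hy.ne', mul_comm]
  gcongr

lemma psiR_iterate_sub_mem (n : ℕ) {x y : ℝ} (hy : lam n ≤ y) (hyx : y ≤ x) :
    0 ≤ psiR^[n] x - psiR^[n] y ∧ psiR^[n] x - psiR^[n] y ≤ (n + 1) * (x - y) := by
  induction n generalizing x y with
  | zero => simpa using hyx
  | succ n ih =>
    have hy0 : 0 < y := (lam_succ_pos n).trans_le hy
    have hψy : lam n ≤ psiR y := psiR_lam_succ n ▸ psiR_le_psiR (lam_succ_pos n) hy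
    have hψ : psiR x - psiR y ≤ (1 + 1 / (n + 1)) * (x - y) := by
      refine psiR_sub_psiR_le (by positivity) ?_ hy0 hyx
      have := natCast_le_lam_sq (n + 1)
      push_cast at this
      nlinarith [lam_succ_pos n]
    obtain ⟨h0, hle⟩ := ih hψy (psiR_le_psiR hy0 hyx)
    simp only [Function.iterate_succ_apply]
    refine ⟨h0, hle.trans ?_⟩
    calc ((n : ℝ) + 1) * (psiR x - psiR y) ≤ (n + 1) * ((1 + 1 / (n + 1)) * (x - y)) := by
          gcongr
      _ = (↑(n + 1) + 1) * (x - y) := by push_cast; field_simp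

lemma rpow_sub_rpow_le_mul_sub {u v s : ℝ} (hv : 1 ≤ v) (hvu : v ≤ u) (hs0 : 0 ≤ s)
    (hs1 : s ≤ 1) : u ^ s - v ^ s ≤ s * (u - v) := by
  have hv0 : 0 < v := by linarith
  have hbern : (u / v) ^ s ≤ 1 + s * (u / v - 1) := by
    simpa using rpow_one_add_le_one_add_mul_self
      (by linarith [div_nonneg (hv0.le.trans hvu) hv0.le] : -1 ≤ u / v - 1) hs0 hs1
  have hvs : v ^ s ≤ v := by simpa using Real.rpow_le_rpow_of_exponent_le hv hs1
  have hsplit : u ^ s = v ^ s * (u / v) ^ s := by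
    rw [← Real.mul_rpow hv0.le (div_nonneg (by linarith) hv0.le), mul_div_cancel₀ _ hv0.ne']
  calc u ^ s - v ^ s ≤ v ^ s * (s * (u / v - 1)) := by
        rw [hsplit]; nlinarith [Real.rpow_pos_of_pos hv0 s]
    _ = v ^ s / v * (s * (u - v)) := by field_simp
    _ ≤ 1 * (s * (u - v)) :=
        mul_le_mul_of_nonneg_right ((div_le_one hv0).2 hvs) (mul_nonneg hs0 (by linarith))
    _ = s * (u - v) := one_mul _

lemma ratio_succ_le_ratio {p q r : ℝ} (hp : 0 < p) (hq : 0 < q)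
    (hpq : q ^ 2 = p * q + 1) (hqr : r ^ 2 = q * r + 1) : r / q ≤ q / p := by
  rw [div_le_div_iff₀ hq hp]
  rcases le_or_gt r 0 with hr | hr
  · nlinarith
  have hp_lt : p < q := by nlinarith
  have hq_lt : q < r := by nlinarith
  nlinarith [mul_pos (sub_pos.2 (hp_lt.trans hq_lt)) (sub_pos.2 hq_lt)]

lemma mul_ratio_sub_ratio_le {p q r : ℝ} (hp : 0 < p) (hq : 0 < q) (hr : 0 < r)
    (hpq : q ^ 2 = p * q + 1) (hqr : r ^ 2 = q * r + 1) :
    q * (q / p - r / q) ≤ (q ^ 2 - p ^ 2) / (q * p ^ 2) := by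
  have hp_lt : p < q := by nlinarith
  have hq_lt : q < r := by nlinarith
  have hexp : q * (q / p - r / q) * (q * p ^ 2) = p * q * (q ^ 2 - p * r) := by
    field_simp
  -- `r - p = 1 / r + 1 / q`, because `q (q - p) = 1` and `r (r - q) = 1`
  have hsplit : r * q * (p * q * (q ^ 2 - p * r)) = p * q ^ 2 * (r - q) + p * q := by
    linear_combination (p * q ^ 2 * r + p * q) * hpq - (p ^ 2 * q ^ 2) * hqr
  have hfar : p * q ^ 2 * (r - q) ≤ r * p := by
    refine le_of_mul_le_mul_left ?_ hr
    rw [show r * (p * q ^ 2 * (r - q)) = p * q ^ 2 by linear_combination (p * q ^ 2) * hqr]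
    nlinarith [mul_le_mul_of_nonneg_left (pow_le_pow_left₀ hq.le hq_lt.le 2) hp.le]
  rw [le_div_iff₀ (by positivity), hexp]
  refine le_of_mul_le_mul_left ?_ (mul_pos hr hq)
  rw [hsplit, show r * q * (q ^ 2 - p ^ 2) = r * p + r * q by linear_combination (r * (q + p)) * hpq]
  nlinarith [mul_lt_mul_of_pos_right (hp_lt.trans hq_lt) hq]

lemma sq_sub_sq_le_two {p q : ℝ} (hpq : q ^ 2 = p * q + 1) :
    q ^ 2 - p ^ 2 ≤ 2 := by
  nlinarith

lemma abs_psiR_iterate_sub_le {s : ℝ} (hs0 : 0 ≤ s) (hs1 : s ≤ 1) {n : ℕ} (hn : 2 ≤ n) :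
    |psiR^[n] (lam n * (lam n / lam (n - 1)) ^ s) -
        psiR^[n] (lam n * (lam (n + 1) / lam n) ^ s)| ≤
      s * (n + 1) / (lam n * lam (n - 1) ^ 2) * (lam n ^ 2 - lam (n - 1) ^ 2) := by
  obtain ⟨m, rfl⟩ : ∃ m, n = m + 1 := ⟨n - 1, by omega⟩
  rw [Nat.add_sub_cancel]
  set p := lam m
  set q := lam (m + 1)
  set r := lam (m + 1 + 1)
  have hp : 0 < p := lam_pos (by omega)
  have hq : 0 < q := lam_succ_pos m
  have hr : 0 < r := lam_succ_pos (m + 1)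
  have hpq : q ^ 2 = p * q + 1 := lam_succ_sq m
  have hqr : r ^ 2 = q * r + 1 := lam_succ_sq (m + 1)
  have hv : 1 ≤ r / q := (one_le_div hq).2 (lam_le_lam_succ _)
  have hvu : r / q ≤ q / p := ratio_succ_le_ratio hp hq hpq hqr
  have hqb : q ≤ q * (r / q) ^ s := le_mul_of_one_le_right hq.le (Real.one_le_rpow hv hs0)
  have hba : q * (r / q) ^ s ≤ q * (q / p) ^ s := by gcongr
  obtain ⟨h0, hlip⟩ := psiR_iterate_sub_mem (m + 1) hqb hba
  rw [abs_of_nonneg h0]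
  calc _ ≤ (↑(m + 1) + 1) * (q * (q / p) ^ s - q * (r / q) ^ s) := hlip
    _ ≤ (↑(m + 1) + 1) * (q * (s * (q / p - r / q))) := by
        rw [← mul_sub]
        gcongr
        exact rpow_sub_rpow_le_mul_sub hv hvu hs0 hs1
    _ = (↑(m + 1) + 1) * s * (q * (q / p - r / q)) := by ring
    _ ≤ (↑(m + 1) + 1) * s * ((q ^ 2 - p ^ 2) / (q * p ^ 2)) := by
        gcongr
        exact mul_ratio_sub_ratio_le hp hq hr hpq hqr
    _ = _ := by ring

lemma gap_bound_le_div_lam {s : ℝ} (hs0 : 0 ≤ s) {n : ℕ} (hn : 2 ≤ n) :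
    s * (n + 1) / (lam n * lam (n - 1) ^ 2) * (lam n ^ 2 - lam (n - 1) ^ 2) ≤ 6 * s / lam n := by
  obtain ⟨m, rfl⟩ : ∃ m, n = m + 1 := ⟨n - 1, by omega⟩
  rw [Nat.add_sub_cancel]
  have hp : 0 < lam m := lam_pos (by omega)
  have hq : 0 < lam (m + 1) := lam_succ_pos m
  have hm : (2 * (m + 1 + 1) : ℝ) ≤ 6 * lam m ^ 2 := by
    have : (1 : ℝ) ≤ m := by exact_mod_cast (show 1 ≤ m by omega)
    linarith [natCast_le_lam_sq m]
  calc _ ≤ s * (↑(m + 1) + 1) / (lam (m + 1) * lam m ^ 2) * 2 := by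
        gcongr
        exact sq_sub_sq_le_two (lam_succ_sq m)
    _ = s * (2 * (m + 1 + 1)) / (lam (m + 1) * lam m ^ 2) := by push_cast; ring
    _ ≤ s * (6 * lam m ^ 2) / (lam (m + 1) * lam m ^ 2) := by gcongr
    _ = 6 * s / lam (m + 1) := by field_simp

theorem stmt_16 (s : ℝ) (hs0 : 0 < s) (hs1 : s ≤ 1) :
    (∀ n : ℕ, 2 ≤ n →
      |psiR^[n] (lam n * (lam n / lam (n - 1)) ^ s) -
        psiR^[n] (lam n * (lam (n + 1) / lam n) ^ s)| ≤
        max (lam 2 ^ (s - 1)) 1 * (s * (n + 1) / (lam n * lam (n - 1) ^ 2)) *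
          (lam n ^ 2 - lam (n - 1) ^ 2)) ∧
    Filter.Tendsto (fun n : ℕ =>
      psiR^[n] (lam n * (lam n / lam (n - 1)) ^ s) -
        psiR^[n] (lam n * (lam (n + 1) / lam n) ^ s)) Filter.atTop (nhds 0) := by
  have hgap := fun n (hn : 2 ≤ n) => abs_psiR_iterate_sub_le hs0.le hs1 hn
  refine ⟨fun n hn => ?_, ?_⟩
  · rw [mul_assoc]
    exact (hgap n hn).trans
      (le_mul_of_one_le_left ((abs_nonneg _).trans (hgap n hn)) (le_max_right _ _))
  · refine squeeze_zero_norm' ?_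
      ((tendsto_const_nhds (x := 6 * s)).div_atTop tendsto_lam_atTop)
    filter_upwards [eventually_ge_atTop 2] with n hn
    exact (hgap n hn).trans (gap_bound_le_div_lam hs0.le hn)
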